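/- arXiv:2304.08583 — 4 statements merged into one kernel-verified Lean document; each statement's English description precedes it below -/
import Mathlib

section
/- Let π be a permutation of {1,...,m}, 1 ≤ t ≤ m-1 with π(m) > π(α) for all 1 ≤ α ≤ t. Let i < j be integers in [0, 2^m) whose binary digits agree on positions π(1),...,π(t) (all equal to prescribed values d_1,...,d_t) but differ at position π(m). Then j - i ≥ ∑_{α=1}^{t} 2^{π(α)-1} + 1. -/
/-!
Put `p = π(m) - 1` and `Q = {π(α) - 1 | 1 ≤ α ≤ t}`, all of whose elements are `< p`, and split
`i = 2^p a + r`, `j = 2^p b + r'` with `r, r' < 2^p`. Since `i ≤ j` differ in bit `p`, `a < b`, so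
`j - i ≥ 2^p + r' - r`. If `S` is the set of binary digits of `r`, then
`r + ∑_Q 2^q = ∑_{S ∪ Q} 2^q + ∑_{S ∩ Q} 2^q`; the first sum is `< 2^p` because `S ∪ Q ⊆ [0, p)`,
and the second is `≤ r'` because `r` and `r'` share their digits on `Q`.
-/

open Finset

/-- `bit l i` is the `l`-th binary digit of `i` (positions indexed from 1). -/
def bit (l i : ℕ) : ℕ := i / 2 ^ (l - 1) % 2

namespace Nat

theorem add_sum_two_pow_lt_of_testBit_eq {p r r' : ℕ} {Q : Finset ℕ} (hr : r < 2 ^ p)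
    (hQ : ∀ q ∈ Q, q < p) (hagree : ∀ q ∈ Q, r.testBit q = r'.testBit q) :
    r + ∑ q ∈ Q, 2 ^ q < 2 ^ p + r' := by
  set S := r.bitIndices.toFinset
  set S' := r'.bitIndices.toFinset
  have hSQ : S ∩ Q = S' ∩ Q := by
    ext q
    simp only [mem_inter, List.mem_toFinset, mem_bitIndices, S, S']
    exact ⟨fun ⟨h, hq⟩ => ⟨hagree q hq ▸ h, hq⟩, fun ⟨h, hq⟩ => ⟨(hagree q hq).symm ▸ h, hq⟩⟩
  have hinter : ∑ q ∈ S ∩ Q, 2 ^ q ≤ r' := by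
    rw [hSQ, ← Finset.sum_toFinset_bitIndices_two_pow r']
    exact sum_le_sum_of_subset inter_subset_left
  have hunion : ∑ q ∈ S ∪ Q, 2 ^ q < 2 ^ p := by
    refine geomSum_lt le_rfl fun q hq => ?_
    rcases mem_union.mp hq with hq | hq
    · exact (pow_lt_pow_iff_right₀ one_lt_two).mp
        ((two_pow_le_of_mem_bitIndices (List.mem_toFinset.mp hq)).trans_lt hr)
    · exact hQ q hq
  calc r + ∑ q ∈ Q, 2 ^ q = ∑ q ∈ S ∪ Q, 2 ^ q + ∑ q ∈ S ∩ Q, 2 ^ q := by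
        rw [sum_union_inter, Finset.sum_toFinset_bitIndices_two_pow]
    _ < 2 ^ p + r' := by omega

theorem div_two_pow_lt_of_testBit_ne {i j p : ℕ} (hij : i ≤ j) (hp : i.testBit p ≠ j.testBit p) :
    i / 2 ^ p < j / 2 ^ p := by
  refine lt_of_le_of_ne (Nat.div_le_div_right hij) fun h => hp ?_
  simpa only [testBit_div_two_pow, zero_add] using congrArg (testBit · 0) h

theorem sum_two_pow_lt_sub_of_testBit_ne {i j p : ℕ} {Q : Finset ℕ} (hij : i ≤ j)
    (hp : i.testBit p ≠ j.testBit p) (hQ : ∀ q ∈ Q, q < p)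
    (hagree : ∀ q ∈ Q, i.testBit q = j.testBit q) :
    ∑ q ∈ Q, 2 ^ q < j - i := by
  have hlow := add_sum_two_pow_lt_of_testBit_eq (r' := j % 2 ^ p) (mod_lt i (Nat.two_pow_pos p)) hQ
    fun q hq => by simp [testBit_mod_two_pow, hQ q hq, hagree q hq]
  have hhigh : 2 ^ p * (i / 2 ^ p) + 2 ^ p ≤ 2 ^ p * (j / 2 ^ p) :=
    Nat.mul_le_mul_left _ (div_two_pow_lt_of_testBit_ne hij hp)
  have := div_add_mod i (2 ^ p)
  have := div_add_mod j (2 ^ p)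
  omega

end Nat

theorem bit_eq_bit_iff (l i j : ℕ) : bit l i = bit l j ↔ i.testBit (l - 1) = j.testBit (l - 1) := by
  simp only [bit, Nat.testBit_eq_decide_div_mod_eq, decide_eq_decide]
  omega

theorem stmt9_general (m t : ℕ) (ht2 : t ≤ m - 1)
    (π : Equiv.Perm ℕ) (hπ : ∀ α, α ∈ Finset.Icc 1 m ↔ π α ∈ Finset.Icc 1 m)
    (hmax : ∀ α ∈ Finset.Icc 1 t, π α < π m)
    (i j : ℕ) (hij : i < j)
    (hagree : ∀ α ∈ Finset.Icc 1 t, bit (π α) i = bit (π α) j)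
    (hdiff : bit (π m) i ≠ bit (π m) j) :
    (∑ α ∈ Finset.Icc 1 t, 2 ^ (π α - 1)) + 1 ≤ j - i := by
  have hpos : ∀ α ∈ Icc 1 t, 1 ≤ π α := fun α hα => by
    have := (hπ α).mp (by simp only [mem_Icc] at hα ⊢; omega)
    exact (mem_Icc.mp this).1
  have hinj : Set.InjOn (fun α => π α - 1) (Icc 1 t) := fun a ha b hb hab => by
    have := hpos a ha
    have := hpos b hb
    exact π.injective (by simp only at hab; omega)
  rw [← sum_image (f := fun q => 2 ^ q) hinj]
  refine Nat.sum_two_pow_lt_sub_of_testBit_ne hij.le ((bit_eq_bit_iff _ _ _).not.mp hdiff) ?_ ?_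
  · refine forall_mem_image.mpr fun α hα => ?_
    have := hpos α hα
    have := hmax α hα
    omega
  · exact forall_mem_image.mpr fun α hα => (bit_eq_bit_iff _ _ _).mp (hagree α hα)

theorem stmt9 (m t : ℕ) (ht1 : 1 ≤ t) (ht2 : t ≤ m - 1)
    (π : Equiv.Perm ℕ) (hπ : ∀ α, α ∈ Finset.Icc 1 m ↔ π α ∈ Finset.Icc 1 m)
    (hmax : ∀ α ∈ Finset.Icc 1 t, π α < π m)
    (i j : ℕ) (hij : i < j) (hj : j < 2 ^ m)
    (hagree : ∀ α ∈ Finset.Icc 1 t, bit (π α) i = bit (π α) j)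
    (hdiff : bit (π m) i ≠ bit (π m) j) :
    (∑ α ∈ Finset.Icc 1 t, 2 ^ (π α - 1)) + 1 ≤ j - i :=
  stmt9_general m t ht2 π hπ hmax i j hij hagree hdiff
end

section
/- Let q be even, m ≥ 1, and define the GDJ function f(x_1,...,x_m) = (q/2)∑_{l=1}^{m-1} x_{π(l)} x_{π(l+1)} + ∑_{l=1}^{m} g_l x_l + g_0 over Z_q for a permutation π of {1,...,m} and g_l ∈ Z_q. Then the pair of sequences (ξ^{f}, ξ^{f + (q/2) x_{π(1)}}) of length 2^m is a Golay complementary pair: ρ(C_0;u) + ρ(C_1;u) = 0 for all 0 < |u| < 2^m, and equals 2^{m+1} at u = 0. -/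
open Finset Complex

/-- The primitive `q`-th root of unity `ξ = e^{2πi/q}`. -/
noncomputable def xi (q : ℕ) : ℂ := Complex.exp (2 * Real.pi * Complex.I / q)

/-- The GDJ generalized Boolean function evaluated at index `i`. -/
def fGDJ (q m : ℕ) (π : Equiv.Perm ℕ) (g : ℕ → ℕ) (i : ℕ) : ℕ :=
  q / 2 * (∑ l ∈ Finset.Icc 1 (m - 1), bit (π l) i * bit (π (l + 1)) i) +
    (∑ l ∈ Finset.Icc 1 m, g l * bit l i) + g 0

/-- The GDJ pair members `C_k` (k = 0,1), sequences of length `2^m`. -/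
noncomputable def CGDJ (q m : ℕ) (π : Equiv.Perm ℕ) (g : ℕ → ℕ) (k i : ℕ) : ℂ :=
  xi q ^ (fGDJ q m π g i + q / 2 * k * bit (π 1) i)

/-- Aperiodic cross-correlation of two length-`L` complex sequences at integer shift `u`. -/
noncomputable def rho (L : ℕ) (C D : ℕ → ℂ) (u : ℤ) : ℂ :=
  if 0 ≤ u then ∑ i ∈ Finset.range (L - u.toNat), C (i + u.toNat) * (starRingEnd ℂ) (D i)
  else ∑ i ∈ Finset.range (L - (-u).toNat), C i * (starRingEnd ℂ) (D (i + (-u).toNat))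

/-!
For `u > 0`, `ρ(C₀;u) + ρ(C₁;u) = ∑ᵢ corr i (i + u)`, and the summand vanishes unless `i` and
`i + u` agree in bit `π 1`. Otherwise let `v ≥ 2` be the first position along the path `π` at which
they differ, and flip bit `π (v - 1)` of both. This keeps the shift `u` and the position `v`, so it
is an involution of the surviving indices; among the path edges only `{π (v - 1), π v}` sees the
flip differently at `i` and at `i + u`, so `f (i + u) - f i` changes by an odd multiple of `q / 2`
and the summand changes sign. Negative shifts are conjugates of positive ones, and at shift `0`
every term has modulus one.
-/

open ComplexConjugate

namespace GDJ

lemma bit_eq_toNat_testBit (l a : ℕ) : bit l a = (a.testBit (l - 1)).toNat := by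
  rw [Nat.testBit_eq_decide_div_mod_eq, bit]
  rcases Nat.mod_two_eq_zero_or_one (a / 2 ^ (l - 1)) with h | h <;> simp [h]

lemma bit_le_one (l a : ℕ) : bit l a ≤ 1 := Nat.le_of_lt_succ (Nat.mod_lt _ two_pos)

def flip (p a : ℕ) : ℕ := a ^^^ 2 ^ (p - 1)

lemma testBit_flip (p a k : ℕ) : (flip p a).testBit k = (a.testBit k ^^ decide (p - 1 = k)) := by
  rw [flip, Nat.testBit_xor, Nat.testBit_two_pow]

lemma bit_flip_self (p a : ℕ) : bit p (flip p a) = 1 - bit p a := by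
  simp only [bit_eq_toNat_testBit, testBit_flip, decide_true, Bool.xor_true]
  cases a.testBit (p - 1) <;> rfl

lemma bit_flip_of_ne {l p : ℕ} (hl : 1 ≤ l) (hp : 1 ≤ p) (h : l ≠ p) (a : ℕ) :
    bit l (flip p a) = bit l a := by
  rw [bit_eq_toNat_testBit, bit_eq_toNat_testBit, testBit_flip,
    decide_eq_false (by omega : p - 1 ≠ l - 1), Bool.xor_false]

lemma bit_flip_eq_bit_flip_iff (l p a b : ℕ) :
    bit l (flip p a) = bit l (flip p b) ↔ bit l a = bit l b := by
  simp only [bit_eq_toNat_testBit, testBit_flip]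
  cases a.testBit (l - 1) <;> cases b.testBit (l - 1) <;> cases decide (p - 1 = l - 1) <;> decide

lemma bit_flip_self_cast (p a : ℕ) : (bit p (flip p a) : ℤ) = 1 - bit p a := by
  rw [bit_flip_self, Nat.cast_sub (bit_le_one p a), Nat.cast_one]

lemma flip_flip (p a : ℕ) : flip p (flip p a) = a := Nat.xor_xor_cancel_right a _

lemma flip_ne_self (p a : ℕ) : flip p a ≠ a := fun h => by
  have := bit_flip_self p a
  rw [h] at this
  have := bit_le_one p a
  omega

lemma flip_lt_two_pow {p m a : ℕ} (hp : p ∈ Icc 1 m) (ha : a < 2 ^ m) : flip p a < 2 ^ m := by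
  have := mem_Icc.mp hp
  exact Nat.xor_lt_two_pow ha (Nat.pow_lt_pow_right one_lt_two (by omega))

-- Flipping a clear bit adds `2 ^ (p - 1)`, flipping a set one subtracts it; written without `-`.
lemma flip_add_two_pow_mul_bit (p a : ℕ) :
    flip p a + 2 ^ (p - 1) * bit p a = a + 2 ^ (p - 1) * (1 - bit p a) := by
  set k := p - 1
  have hdiv : flip p a / 2 ^ k = a / 2 ^ k ^^^ 1 := by
    rw [flip, Nat.xor_div_two_pow, Nat.div_self (by positivity)]
  have hmod : flip p a % 2 ^ k = a % 2 ^ k := by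
    rw [flip, Nat.xor_mod_two_pow, Nat.mod_self, Nat.xor_zero]
  have hf := Nat.div_add_mod (flip p a) (2 ^ k)
  have ha := Nat.div_add_mod a (2 ^ k)
  rw [hdiv, hmod] at hf
  have hbit : bit p a = a / 2 ^ k % 2 := rfl
  set n := a / 2 ^ k
  rcases Nat.mod_two_eq_zero_or_one n with h | h
  · rw [Nat.xor_one_of_even (Nat.even_iff.mpr h)] at hf
    rw [hbit, h]
    linarith
  · rw [Nat.xor_one_of_odd (Nat.odd_iff.mpr h), Nat.mul_sub_one] at hf
    have : 2 ^ k ≤ 2 ^ k * n :=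
      Nat.le_mul_of_pos_right _ (Nat.pos_of_ne_zero fun h0 => by simp [h0] at h)
    rw [hbit, h]
    omega

lemma flip_add_comm {p a u : ℕ} (h : bit p a = bit p (a + u)) : flip p a + u = flip p (a + u) := by
  have ha := flip_add_two_pow_mul_bit p a
  have hau := flip_add_two_pow_mul_bit p (a + u)
  rw [← h] at hau
  omega

lemma eq_of_bit_eq {m a b : ℕ} (ha : a < 2 ^ m) (hb : b < 2 ^ m)
    (h : ∀ l ∈ Icc 1 m, bit l a = bit l b) : a = b := by
  refine Nat.eq_of_testBit_eq fun k => ?_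
  by_cases hk : k < m
  · have := h (k + 1) (mem_Icc.mpr ⟨by omega, hk⟩)
    simp only [bit_eq_toNat_testBit, Nat.add_sub_cancel] at this
    revert this
    cases a.testBit k <;> cases b.testBit k <;> simp
  · have hle : 2 ^ m ≤ 2 ^ k := Nat.pow_le_pow_right two_pos (by omega)
    rw [Nat.testBit_lt_two_pow (ha.trans_le hle), Nat.testBit_lt_two_pow (hb.trans_le hle)]

lemma xi_ne_zero (q : ℕ) : xi q ≠ 0 := Complex.exp_ne_zero _

lemma xi_pow_half {q : ℕ} (hq : 2 ∣ q) (hq0 : 0 < q) : xi q ^ (q / 2) = -1 := by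
  have h := (Complex.isPrimitiveRoot_exp q hq0.ne').pow_of_dvd (p := q / 2) (by omega)
    (Nat.div_dvd_of_dvd hq)
  rw [Nat.div_div_self hq hq0.ne'] at h
  exact h.eq_neg_one_of_two_right

lemma conj_xi (q : ℕ) : conj (xi q) = (xi q)⁻¹ := by
  rw [xi, ← Complex.exp_conj, ← Complex.exp_neg]
  congr 1
  simp [map_div₀, Complex.conj_I, map_ofNat]
  ring

lemma xi_pow_mul_conj_xi_pow (q A B : ℕ) : xi q ^ A * conj (xi q ^ B) = xi q ^ ((A : ℤ) - B) := by
  rw [map_pow, conj_xi, inv_pow, zpow_sub₀ (xi_ne_zero q), zpow_natCast, zpow_natCast,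
    div_eq_mul_inv]

lemma xi_pow_mul_conj_xi_pow_self (q A : ℕ) : xi q ^ A * conj (xi q ^ A) = 1 := by
  rw [xi_pow_mul_conj_xi_pow, sub_self, zpow_zero]

lemma xi_zpow_add_half_mul_odd {q : ℕ} (hq : 2 ∣ q) (hq0 : 0 < q) (x : ℤ) {s : ℤ} (hs : Odd s) :
    xi q ^ (x + ((q / 2 : ℕ) : ℤ) * s) = -xi q ^ x := by
  rw [zpow_add₀ (xi_ne_zero q), zpow_mul, zpow_natCast, xi_pow_half hq hq0,
    hs.neg_one_zpow, mul_neg_one]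

lemma rho_natCast (L : ℕ) (C D : ℕ → ℂ) (n : ℕ) :
    rho L C D n = ∑ i ∈ range (L - n), C (i + n) * conj (D i) := by
  simp [rho]

lemma rho_neg_natCast (L : ℕ) (C D : ℕ → ℂ) (n : ℕ) :
    rho L C D (-n) = conj (rho L D C n) := by
  rcases Nat.eq_zero_or_pos n with rfl | hn
  · simp [rho, mul_comm]
  · simp [rho, hn.ne', mul_comm]

lemma rho_zero_of_mul_conj_eq_one (L : ℕ) {C : ℕ → ℂ} (hC : ∀ i, C i * conj (C i) = 1) :
    rho L C C 0 = L := by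
  simp [rho, hC]

section Sequences

variable (q m : ℕ) (π : Equiv.Perm ℕ) (g : ℕ → ℕ)

def pathSum (a : ℕ) : ℤ := ∑ l ∈ Icc 1 (m - 1), (bit (π l) a : ℤ) * bit (π (l + 1)) a

def linearSum (a : ℕ) : ℤ := ∑ l ∈ Icc 1 m, (g l : ℤ) * bit l a

lemma fGDJ_cast (a : ℕ) :
    (fGDJ q m π g a : ℤ) = ((q / 2 : ℕ) : ℤ) * pathSum m π a + linearSum m g a + g 0 := by
  simp only [fGDJ, pathSum, linearSum]
  push_cast
  ring

noncomputable def corr (i j : ℕ) : ℂ :=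
  CGDJ q m π g 0 j * conj (CGDJ q m π g 0 i) + CGDJ q m π g 1 j * conj (CGDJ q m π g 1 i)

variable {q m π g}

lemma linearSum_flip_sub {p : ℕ} (hp : p ∈ Icc 1 m) (a : ℕ) :
    linearSum m g (flip p a) - linearSum m g a = g p * (1 - 2 * (bit p a : ℤ)) := by
  rw [linearSum, linearSum, ← sum_sub_distrib, sum_eq_single_of_mem p hp]
  · rw [bit_flip_self_cast]
    ring
  · intro l hl hne
    rw [bit_flip_of_ne (mem_Icc.mp hl).1 (mem_Icc.mp hp).1 hne, sub_self]

/-- Flipping the bit `π (v - 1)` only touches the two path terms at `v - 2` and `v - 1`; when `i`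
and `j` agree along the path before `v`, the first cancels in the second difference. -/
lemma pathSum_flip_sub (hπ : ∀ α, α ∈ Icc 1 m ↔ π α ∈ Icc 1 m) {v : ℕ} (hv : v ∈ Icc 2 m)
    {i j : ℕ} (hagree : ∀ l ∈ Ico 1 v, bit (π l) j = bit (π l) i) :
    pathSum m π (flip (π (v - 1)) j) - pathSum m π (flip (π (v - 1)) i)
        - (pathSum m π j - pathSum m π i)
      = (1 - 2 * (bit (π (v - 1)) i : ℤ)) * ((bit (π v) j : ℤ) - bit (π v) i) := by
  obtain ⟨hv2, hvm⟩ := mem_Icc.mp hv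
  set p := π (v - 1)
  have hπpos : ∀ l, 1 ≤ l → l ≤ m → 1 ≤ π l := fun l h1 h2 =>
    (mem_Icc.mp ((hπ l).mp (mem_Icc.mpr ⟨h1, h2⟩))).1
  have hne : ∀ l, l ≠ v - 1 → π l ≠ p := fun l hl h => hl (π.injective h)
  have hpij : bit p j = bit p i := hagree (v - 1) (mem_Ico.mpr ⟨by omega, by omega⟩)
  simp only [pathSum, ← sum_sub_distrib]
  rw [sum_eq_single_of_mem (v - 1) (mem_Icc.mpr ⟨by omega, by omega⟩)]
  · rw [Nat.sub_add_cancel (by omega : 1 ≤ v), bit_flip_self_cast, bit_flip_self_cast,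
      bit_flip_of_ne (hπpos v (by omega) hvm) (hπpos _ (by omega) (by omega)) (hne v (by omega)),
      bit_flip_of_ne (hπpos v (by omega) hvm) (hπpos _ (by omega) (by omega)) (hne v (by omega)),
      hpij]
    ring
  · intro l hl hlv
    obtain ⟨hl1, hlm⟩ := mem_Icc.mp hl
    rcases lt_or_gt_of_ne hlv with hlt | hgt
    · have h1 := hagree l (mem_Ico.mpr ⟨hl1, by omega⟩)
      have h2 := hagree (l + 1) (mem_Ico.mpr ⟨by omega, by omega⟩)
      rw [(bit_flip_eq_bit_flip_iff _ p j i).mpr h1, (bit_flip_eq_bit_flip_iff _ p j i).mpr h2,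
        h1, h2]
      ring
    · have hp1 : 1 ≤ p := hπpos _ (by omega) (by omega)
      rw [bit_flip_of_ne (hπpos l hl1 (by omega)) hp1 (hne l hlv),
        bit_flip_of_ne (hπpos l hl1 (by omega)) hp1 (hne l hlv),
        bit_flip_of_ne (hπpos (l + 1) (by omega) (by omega)) hp1 (hne (l + 1) (by omega)),
        bit_flip_of_ne (hπpos (l + 1) (by omega) (by omega)) hp1 (hne (l + 1) (by omega))]
      ring

lemma fGDJ_flip_sub (hπ : ∀ α, α ∈ Icc 1 m ↔ π α ∈ Icc 1 m) {v : ℕ} (hv : v ∈ Icc 2 m)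
    {i j : ℕ} (hagree : ∀ l ∈ Ico 1 v, bit (π l) j = bit (π l) i)
    (hdiff : bit (π v) j ≠ bit (π v) i) :
    ∃ s : ℤ, Odd s ∧
      (fGDJ q m π g (flip (π (v - 1)) j) : ℤ) - fGDJ q m π g (flip (π (v - 1)) i)
        = (fGDJ q m π g j : ℤ) - fGDJ q m π g i + ((q / 2 : ℕ) : ℤ) * s := by
  obtain ⟨hv2, hvm⟩ := mem_Icc.mp hv
  have hp : π (v - 1) ∈ Icc 1 m := (hπ _).mp (mem_Icc.mpr ⟨by omega, by omega⟩)
  have hpij := hagree (v - 1) (mem_Ico.mpr ⟨by omega, by omega⟩)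
  refine ⟨(1 - 2 * (bit (π (v - 1)) i : ℤ)) * ((bit (π v) j : ℤ) - bit (π v) i), ?_, ?_⟩
  · have := bit_le_one (π v) j
    have := bit_le_one (π v) i
    have hodd : Odd (1 - 2 * (bit (π (v - 1)) i : ℤ)) := ⟨-(bit (π (v - 1)) i : ℤ), by ring⟩
    exact hodd.mul (Int.odd_iff.mpr (by omega))
  · have hlin_j := linearSum_flip_sub (g := g) hp j
    have hlin_i := linearSum_flip_sub (g := g) hp i
    rw [hpij] at hlin_j
    simp only [fGDJ_cast]
    linear_combination ((q / 2 : ℕ) : ℤ) * pathSum_flip_sub hπ hv hagree + hlin_j - hlin_i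

lemma CGDJ_mul_conj (k i j : ℕ) :
    CGDJ q m π g k j * conj (CGDJ q m π g k i) = xi q ^ ((fGDJ q m π g j : ℤ) - fGDJ q m π g i
      + ((q / 2 : ℕ) : ℤ) * (k * ((bit (π 1) j : ℤ) - bit (π 1) i))) := by
  rw [CGDJ, CGDJ, xi_pow_mul_conj_xi_pow]
  push_cast
  ring_nf

lemma CGDJ_mul_conj_self (k i : ℕ) : CGDJ q m π g k i * conj (CGDJ q m π g k i) = 1 :=
  xi_pow_mul_conj_xi_pow_self _ _

lemma corr_eq_zero_of_bit_ne (hq : 2 ∣ q) (hq0 : 0 < q) {i j : ℕ}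
    (h : bit (π 1) j ≠ bit (π 1) i) : corr q m π g i j = 0 := by
  have := bit_le_one (π 1) j
  have := bit_le_one (π 1) i
  rw [corr, CGDJ_mul_conj, CGDJ_mul_conj]
  simp only [Nat.cast_zero, zero_mul, mul_zero, add_zero, Nat.cast_one, one_mul]
  rw [xi_zpow_add_half_mul_odd hq hq0 _ (Int.odd_iff.mpr (by omega)), add_neg_cancel]

lemma corr_of_bit_eq {i j : ℕ} (h : bit (π 1) j = bit (π 1) i) :
    corr q m π g i j = 2 * xi q ^ ((fGDJ q m π g j : ℤ) - fGDJ q m π g i) := by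
  rw [corr, CGDJ_mul_conj, CGDJ_mul_conj, h]
  simp only [sub_self, mul_zero, add_zero]
  ring

lemma corr_flip (hq : 2 ∣ q) (hq0 : 0 < q) (hπ : ∀ α, α ∈ Icc 1 m ↔ π α ∈ Icc 1 m)
    {v : ℕ} (hv : v ∈ Icc 2 m) {i j : ℕ} (hagree : ∀ l ∈ Ico 1 v, bit (π l) j = bit (π l) i)
    (hdiff : bit (π v) j ≠ bit (π v) i) :
    corr q m π g (flip (π (v - 1)) i) (flip (π (v - 1)) j) = -corr q m π g i j := by
  have h1 := hagree 1 (mem_Ico.mpr ⟨le_rfl, by linarith [mem_Icc.mp hv]⟩)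
  obtain ⟨s, hs, hf⟩ := fGDJ_flip_sub (q := q) (g := g) hπ hv hagree hdiff
  rw [corr_of_bit_eq ((bit_flip_eq_bit_flip_iff _ _ _ _).mpr h1), corr_of_bit_eq h1, hf,
    xi_zpow_add_half_mul_odd hq hq0 _ hs, mul_neg]

end Sequences

section Involution

variable (m : ℕ) (π : Equiv.Perm ℕ)

def diffSet (u i : ℕ) : Set ℕ := {l | l ∈ Icc 1 m ∧ bit (π l) (i + u) ≠ bit (π l) i}

noncomputable def firstDiff (u i : ℕ) : ℕ := sInf (diffSet m π u i)

noncomputable def partner (u i : ℕ) : ℕ :=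
  if bit (π 1) (i + u) = bit (π 1) i then flip (π (firstDiff m π u i - 1)) i else i

variable {m π}

lemma diffSet_nonempty (hπ : ∀ α, α ∈ Icc 1 m ↔ π α ∈ Icc 1 m) {u i : ℕ} (hu : 0 < u)
    (hiu : i + u < 2 ^ m) : (diffSet m π u i).Nonempty := by
  have : ¬ ∀ l ∈ Icc 1 m, bit l (i + u) = bit l i := fun h => by
    have := eq_of_bit_eq hiu (by omega) h
    omega
  push Not at this
  obtain ⟨l, hl, hne⟩ := this
  exact ⟨π.symm l, (hπ _).mpr (by simpa using hl), by simpa using hne⟩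

lemma firstDiff_spec (hπ : ∀ α, α ∈ Icc 1 m ↔ π α ∈ Icc 1 m) {u i : ℕ} (hu : 0 < u)
    (hiu : i + u < 2 ^ m) :
    firstDiff m π u i ∈ Icc 1 m ∧
      bit (π (firstDiff m π u i)) (i + u) ≠ bit (π (firstDiff m π u i)) i ∧
      ∀ l ∈ Ico 1 (firstDiff m π u i), bit (π l) (i + u) = bit (π l) i := by
  obtain ⟨hmem, hne⟩ := Nat.sInf_mem (diffSet_nonempty hπ hu hiu)
  refine ⟨hmem, hne, fun l hl => ?_⟩
  obtain ⟨hl1, hlv⟩ := mem_Ico.mp hl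
  by_contra h
  exact Nat.notMem_of_lt_sInf hlv
    ⟨mem_Icc.mpr ⟨hl1, (hlv.trans_le (mem_Icc.mp hmem).2).le⟩, h⟩

lemma diffSet_flip {p u i : ℕ} (h : flip p i + u = flip p (i + u)) :
    diffSet m π u (flip p i) = diffSet m π u i := by
  ext l
  exact and_congr_right fun _ => by rw [h, Ne, bit_flip_eq_bit_flip_iff]

lemma exists_partner_eq_flip {q : ℕ} (g : ℕ → ℕ) (hq : 2 ∣ q) (hq0 : 0 < q)
    (hπ : ∀ α, α ∈ Icc 1 m ↔ π α ∈ Icc 1 m) {u i : ℕ} (hu : 0 < u) (hiu : i + u < 2 ^ m)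
    (hb : bit (π 1) (i + u) = bit (π 1) i) :
    ∃ p ∈ Icc 1 m, partner m π u i = flip p i ∧ flip p i + u = flip p (i + u) ∧
      partner m π u (flip p i) = i ∧
      corr q m π g (flip p i) (flip p i + u) = -corr q m π g i (i + u) := by
  obtain ⟨hv, hdiff, hagree⟩ := firstDiff_spec hπ hu hiu
  set v := firstDiff m π u i
  have hv2 : v ∈ Icc 2 m := by
    refine mem_Icc.mpr ⟨?_, (mem_Icc.mp hv).2⟩
    by_contra h
    have hv1 : v = 1 := by linarith [(mem_Icc.mp hv).1]
    exact hdiff (hv1 ▸ hb)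
  obtain ⟨h2v, hvm⟩ := mem_Icc.mp hv2
  have hadd : flip (π (v - 1)) i + u = flip (π (v - 1)) (i + u) :=
    flip_add_comm (hagree (v - 1) (mem_Ico.mpr ⟨by omega, by omega⟩)).symm
  have hb' : bit (π 1) (flip (π (v - 1)) i + u) = bit (π 1) (flip (π (v - 1)) i) := by
    rw [hadd, bit_flip_eq_bit_flip_iff]
    exact hb
  refine ⟨π (v - 1), (hπ _).mp (mem_Icc.mpr ⟨by omega, by omega⟩), if_pos hb, hadd, ?_, ?_⟩
  · rw [partner, if_pos hb', firstDiff, diffSet_flip hadd, ← firstDiff, flip_flip]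
  · rw [hadd]
    exact corr_flip hq hq0 hπ hv2 hagree hdiff

lemma sum_corr_eq_zero {q : ℕ} (g : ℕ → ℕ) (hq : 2 ∣ q) (hq0 : 0 < q)
    (hπ : ∀ α, α ∈ Icc 1 m ↔ π α ∈ Icc 1 m) {u : ℕ} (hu : 0 < u) :
    ∑ i ∈ range (2 ^ m - u), corr q m π g i (i + u) = 0 := by
  have hiu : ∀ i ∈ range (2 ^ m - u), i + u < 2 ^ m := fun i hi => by
    have := mem_range.mp hi
    omega
  have hfix : ∀ i, bit (π 1) (i + u) ≠ bit (π 1) i → partner m π u i = i := fun i hb =>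
    if_neg hb
  have hpair := fun i hi => exists_partner_eq_flip g hq hq0 hπ hu (hiu i hi)
  refine sum_involution (fun i _ => partner m π u i) (fun i hi => ?_) (fun i hi hne => ?_)
    (fun i hi => ?_) (fun i hi => ?_)
  all_goals by_cases hb : bit (π 1) (i + u) = bit (π 1) i
  · obtain ⟨p, -, hpart, -, -, hcorr⟩ := hpair i hi hb
    rw [hpart, hcorr, add_neg_cancel]
  · rw [hfix i hb, corr_eq_zero_of_bit_ne hq hq0 hb, add_zero]
  · obtain ⟨p, -, hpart, -⟩ := hpair i hi hb
    exact hpart ▸ flip_ne_self p i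
  · exact absurd (corr_eq_zero_of_bit_ne hq hq0 hb) hne
  · obtain ⟨p, hp, hpart, hadd, -⟩ := hpair i hi hb
    have := flip_lt_two_pow hp (hiu i hi)
    rw [hpart, mem_range]
    omega
  · rwa [hfix i hb]
  · obtain ⟨p, -, hpart, -, hback, -⟩ := hpair i hi hb
    rw [hpart, hback]
  · rw [hfix i hb, hfix i hb]

end Involution

end GDJ

theorem stmt11_general (q m : ℕ) (hq : 2 ∣ q) (hq0 : 0 < q)
    (π : Equiv.Perm ℕ) (hπ : ∀ α, α ∈ Finset.Icc 1 m ↔ π α ∈ Finset.Icc 1 m)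
    (g : ℕ → ℕ) :
    (∀ u : ℤ, u ≠ 0 → |u| < 2 ^ m →
        rho (2 ^ m) (CGDJ q m π g 0) (CGDJ q m π g 0) u +
          rho (2 ^ m) (CGDJ q m π g 1) (CGDJ q m π g 1) u = 0) ∧
      rho (2 ^ m) (CGDJ q m π g 0) (CGDJ q m π g 0) 0 +
        rho (2 ^ m) (CGDJ q m π g 1) (CGDJ q m π g 1) 0 = 2 ^ (m + 1) := by
  have hshift : ∀ n : ℕ, 0 < n →
      rho (2 ^ m) (CGDJ q m π g 0) (CGDJ q m π g 0) n +
        rho (2 ^ m) (CGDJ q m π g 1) (CGDJ q m π g 1) n = 0 := fun n hn => by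
    rw [GDJ.rho_natCast, GDJ.rho_natCast, ← sum_add_distrib]
    exact GDJ.sum_corr_eq_zero g hq hq0 hπ hn
  refine ⟨fun u hu _ => ?_, ?_⟩
  · obtain ⟨n, rfl | rfl⟩ := Int.eq_nat_or_neg u
    · exact hshift n (by omega)
    · rw [GDJ.rho_neg_natCast, GDJ.rho_neg_natCast, ← map_add, hshift n (by omega), map_zero]
  · rw [GDJ.rho_zero_of_mul_conj_eq_one _ (GDJ.CGDJ_mul_conj_self 0),
      GDJ.rho_zero_of_mul_conj_eq_one _ (GDJ.CGDJ_mul_conj_self 1)]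
    push_cast
    ring

theorem stmt11 (q m : ℕ) (hq : 2 ∣ q) (hq0 : 0 < q) (hm : 1 ≤ m)
    (π : Equiv.Perm ℕ) (hπ : ∀ α, α ∈ Finset.Icc 1 m ↔ π α ∈ Finset.Icc 1 m)
    (g : ℕ → ℕ) :
    (∀ u : ℤ, u ≠ 0 → |u| < 2 ^ m →
        rho (2 ^ m) (CGDJ q m π g 0) (CGDJ q m π g 0) u +
          rho (2 ^ m) (CGDJ q m π g 1) (CGDJ q m π g 1) u = 0) ∧
      rho (2 ^ m) (CGDJ q m π g 0) (CGDJ q m π g 0) 0 +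
        rho (2 ^ m) (CGDJ q m π g 1) (CGDJ q m π g 1) 0 = 2 ^ (m + 1) :=
  stmt11_general q m hq hq0 π hπ g
end

section
/- Let m ≥ 2, π a permutation of {1,...,m}, 1 ≤ t ≤ m-1 with π(m) > π(α) for 1 ≤ α ≤ t. Set σ(α) = π(m+1-α). Let i, j ∈ [0, 2^m) be restricted indices (bits at π(1),...,π(t) equal to d) with i_{σ(1)} = j_{σ(1)}, and let β ≥ 2 be the smallest index with i_{σ(β)} ≠ j_{σ(β)}. Define i' and j' by flipping bit σ(β-1) of i and j respectively. Then i' and j' are also restricted indices, i' ≤ ∑_{α=t+1}^{m} 2^{π(α)-1} - 2^{σ(β-1)-1} + 1 - 1 < L and similarly j' < L, where L = ∑_{α=t+1}^{m} 2^{π(α)-1} + 1, after subtracting the offset k_0 = ∑ d_α 2^{π(α)-1}. -/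
/-!
Flipping bit `v` is `n ↦ n ^^^ 2 ^ (v - 1)`. Since `2 ≤ β ≤ m - t`, the flipped position
`π (m + 2 - β)` is one of the free positions `π (t + 1), …, π m`: the restricted bits are left
alone and the result stays below `2 ^ m`. An `m`-bit number whose set bits all lie in the free
positions is at most the sum of their powers of two, which is `L - 1`.
-/

open Finset

/-- Flip the binary digit at position `v` (positions indexed from 1) of `i`. -/
def flipBit (v i : ℕ) : ℕ := if bit v i = 0 then i + 2 ^ (v - 1) else i - 2 ^ (v - 1)

namespace Nat

theorem testBit_sum_two_pow {s : Finset ℕ} {k : ℕ} :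
    (∑ i ∈ s, 2 ^ i).testBit k = true ↔ k ∈ s := by
  rw [← mem_bitIndices, ← List.mem_toFinset, toFinset_bitIndices_sum_two_pow]

theorem le_sum_two_pow_of_testBit {n : ℕ} {s : Finset ℕ} (h : ∀ k, n.testBit k = true → k ∈ s) :
    n ≤ ∑ k ∈ s, 2 ^ k := by
  rw [← sum_toFinset_bitIndices_two_pow n]
  exact sum_le_sum_of_subset fun k hk ↦ h k (by simpa using hk)

theorem add_two_pow_eq_xor_of_testBit_eq_false {n w : ℕ} (h : n.testBit w = false) :
    n + 2 ^ w = n ^^^ 2 ^ w := by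
  have hw : w ∉ n.bitIndices.toFinset := by simp [h]
  have hsum : n + 2 ^ w = ∑ i ∈ insert w n.bitIndices.toFinset, 2 ^ i := by
    rw [sum_insert hw, add_comm, sum_toFinset_bitIndices_two_pow]
  refine eq_of_testBit_eq fun k ↦ Bool.eq_iff_iff.mpr ?_
  rw [hsum, testBit_sum_two_pow]
  by_cases hk : k = w
  · subst hk; simp [h]
  · simp [hk, Ne.symm hk]

theorem sub_two_pow_eq_xor_of_testBit_eq_true {n w : ℕ} (h : n.testBit w = true) :
    n - 2 ^ w = n ^^^ 2 ^ w := by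
  have hflip : (n ^^^ 2 ^ w).testBit w = false := by simp [h]
  have := add_two_pow_eq_xor_of_testBit_eq_false hflip
  rw [Nat.xor_assoc, Nat.xor_self, xor_zero] at this
  omega

end Nat

theorem bit_eq_toNat_testBit (l n : ℕ) : bit l n = (n.testBit (l - 1)).toNat := by
  rw [bit, Nat.testBit_eq_decide_div_mod_eq]
  rcases Nat.mod_two_eq_zero_or_one (n / 2 ^ (l - 1)) with h | h <;> simp [h]

theorem flipBit_eq_xor (v n : ℕ) : flipBit v n = n ^^^ 2 ^ (v - 1) := by
  rw [flipBit, bit_eq_toNat_testBit]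
  cases h : n.testBit (v - 1)
  · simp [Nat.add_two_pow_eq_xor_of_testBit_eq_false h]
  · simp [Nat.sub_two_pow_eq_xor_of_testBit_eq_true h]

theorem bit_flipBit_of_ne {l v : ℕ} (hl : 1 ≤ l) (hv : 1 ≤ v) (h : l ≠ v) (n : ℕ) :
    bit l (flipBit v n) = bit l n := by
  rw [bit_eq_toNat_testBit, bit_eq_toNat_testBit, flipBit_eq_xor, Nat.testBit_xor,
    Nat.testBit_two_pow_of_ne (by omega), Bool.xor_false]

theorem flipBit_lt_two_pow {v m n : ℕ} (hv1 : 1 ≤ v) (hvm : v ≤ m) (hn : n < 2 ^ m) :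
    flipBit v n < 2 ^ m := by
  rw [flipBit_eq_xor]
  exact Nat.xor_lt_two_pow hn (Nat.pow_lt_pow_right (by norm_num) (by omega))

section Permutation

variable {m t : ℕ} {π : Equiv.Perm ℕ}

theorem sum_two_pow_perm_eq_sum_image (hπ : ∀ α, α ∈ Icc 1 m ↔ π α ∈ Icc 1 m) :
    ∑ α ∈ Icc (t + 1) m, 2 ^ (π α - 1) =
      ∑ k ∈ (Icc (t + 1) m).image (fun α ↦ π α - 1), 2 ^ k := by
  refine (sum_image fun a ha b hb hab ↦ π.injective ?_).symm
  simp only [coe_Icc, Set.mem_Icc] at ha hb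
  have ha' := mem_Icc.mp <| (hπ a).mp <| mem_Icc.mpr ⟨by omega, ha.2⟩
  have hb' := mem_Icc.mp <| (hπ b).mp <| mem_Icc.mpr ⟨by omega, hb.2⟩
  omega

theorem sum_two_pow_perm_lt_two_pow (hπ : ∀ α, α ∈ Icc 1 m ↔ π α ∈ Icc 1 m) :
    ∑ α ∈ Icc (t + 1) m, 2 ^ (π α - 1) < 2 ^ m := by
  rw [sum_two_pow_perm_eq_sum_image hπ]
  refine Nat.geomSum_lt le_rfl fun k hk ↦ ?_
  obtain ⟨α, hα, rfl⟩ := mem_image.mp hk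
  rw [mem_Icc] at hα
  have hα' := mem_Icc.mp <| (hπ α).mp <| mem_Icc.mpr ⟨by omega, hα.2⟩
  omega

theorem le_sum_two_pow_perm_of_bit_eq_zero (hπ : ∀ α, α ∈ Icc 1 m ↔ π α ∈ Icc 1 m) {n : ℕ}
    (hn : n < 2 ^ m) (hR : ∀ α ∈ Icc 1 t, bit (π α) n = 0) :
    n ≤ ∑ α ∈ Icc (t + 1) m, 2 ^ (π α - 1) := by
  rw [sum_two_pow_perm_eq_sum_image hπ]
  refine Nat.le_sum_two_pow_of_testBit fun k hk ↦ mem_image.mpr ?_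
  have hkm : k < m :=
    (Nat.pow_lt_pow_iff_right (by norm_num)).mp ((Nat.ge_two_pow_of_testBit hk).trans_lt hn)
  have hα : π.symm (k + 1) ∈ Icc 1 m :=
    (hπ _).mpr <| by rw [Equiv.apply_symm_apply]; exact mem_Icc.mpr ⟨by omega, hkm⟩
  have hαt : t < π.symm (k + 1) := by
    by_contra! hle
    have := hR _ (mem_Icc.mpr ⟨(mem_Icc.mp hα).1, hle⟩)
    simp [bit_eq_toNat_testBit, hk] at this
  exact ⟨π.symm (k + 1), mem_Icc.mpr ⟨hαt, (mem_Icc.mp hα).2⟩, by simp⟩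

theorem bit_flipBit_perm_eq_zero (hπ : ∀ α, α ∈ Icc 1 m ↔ π α ∈ Icc 1 m) {u n : ℕ}
    (hu : u ∈ Icc (t + 1) m) (hR : ∀ α ∈ Icc 1 t, bit (π α) n = 0) :
    ∀ α ∈ Icc 1 t, bit (π α) (flipBit (π u) n) = 0 := by
  intro α hα
  rw [mem_Icc] at hα hu
  have hπα := mem_Icc.mp <| (hπ α).mp <| mem_Icc.mpr ⟨hα.1, by omega⟩
  have hπu := mem_Icc.mp <| (hπ u).mp <| mem_Icc.mpr ⟨by omega, hu.2⟩
  have hne : π α ≠ π u := π.injective.ne (by omega)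
  rw [bit_flipBit_of_ne hπα.1 hπu.1 hne, hR α (mem_Icc.mpr hα)]

theorem flipBit_perm_lt_sum_two_pow_perm (hπ : ∀ α, α ∈ Icc 1 m ↔ π α ∈ Icc 1 m) {u n : ℕ}
    (hu : u ∈ Icc (t + 1) m) (hn : n < ∑ α ∈ Icc (t + 1) m, 2 ^ (π α - 1) + 1)
    (hR : ∀ α ∈ Icc 1 t, bit (π α) n = 0) :
    flipBit (π u) n < ∑ α ∈ Icc (t + 1) m, 2 ^ (π α - 1) + 1 := by
  have hn' : n < 2 ^ m := Nat.le_of_lt_succ hn |>.trans_lt (sum_two_pow_perm_lt_two_pow hπ)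
  have hπu := mem_Icc.mp <| (hπ u).mp <| Icc_subset_Icc_left (Nat.le_add_left 1 t) hu
  exact Nat.lt_succ_of_le <| le_sum_two_pow_perm_of_bit_eq_zero hπ
    (flipBit_lt_two_pow hπu.1 hπu.2 hn') (bit_flipBit_perm_eq_zero hπ hu hR)

end Permutation

theorem stmt16_general (m t : ℕ)
    (π : Equiv.Perm ℕ) (hπ : ∀ α, α ∈ Finset.Icc 1 m ↔ π α ∈ Finset.Icc 1 m)
    (i j β : ℕ)
    (hiL : i < (∑ α ∈ Finset.Icc (t + 1) m, 2 ^ (π α - 1)) + 1)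
    (hjL : j < (∑ α ∈ Finset.Icc (t + 1) m, 2 ^ (π α - 1)) + 1)
    (hiR : ∀ α ∈ Finset.Icc 1 t, bit (π α) i = 0)
    (hjR : ∀ α ∈ Finset.Icc 1 t, bit (π α) j = 0)
    (hβ2 : 2 ≤ β) (hβm : β ≤ m - t) :
    (∀ α ∈ Finset.Icc 1 t, bit (π α) (flipBit (π (m + 1 - (β - 1))) i) = 0) ∧
      (∀ α ∈ Finset.Icc 1 t, bit (π α) (flipBit (π (m + 1 - (β - 1))) j) = 0) ∧
      flipBit (π (m + 1 - (β - 1))) i < (∑ α ∈ Finset.Icc (t + 1) m, 2 ^ (π α - 1)) + 1 ∧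
      flipBit (π (m + 1 - (β - 1))) j < (∑ α ∈ Finset.Icc (t + 1) m, 2 ^ (π α - 1)) + 1 := by
  have hu : m + 1 - (β - 1) ∈ Icc (t + 1) m := mem_Icc.mpr ⟨by omega, by omega⟩
  exact ⟨bit_flipBit_perm_eq_zero hπ hu hiR, bit_flipBit_perm_eq_zero hπ hu hjR,
    flipBit_perm_lt_sum_two_pow_perm hπ hu hiL hiR, flipBit_perm_lt_sum_two_pow_perm hπ hu hjL hjR⟩

theorem stmt16 (m t : ℕ) (hm : 2 ≤ m) (ht1 : 1 ≤ t) (ht2 : t ≤ m - 1)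
    (π : Equiv.Perm ℕ) (hπ : ∀ α, α ∈ Finset.Icc 1 m ↔ π α ∈ Finset.Icc 1 m)
    (hmax : ∀ α ∈ Finset.Icc 1 t, π α < π m)
    (i j β : ℕ)
    (hiL : i < (∑ α ∈ Finset.Icc (t + 1) m, 2 ^ (π α - 1)) + 1)
    (hjL : j < (∑ α ∈ Finset.Icc (t + 1) m, 2 ^ (π α - 1)) + 1)
    (hiR : ∀ α ∈ Finset.Icc 1 t, bit (π α) i = 0)
    (hjR : ∀ α ∈ Finset.Icc 1 t, bit (π α) j = 0)
    (hβ2 : 2 ≤ β) (hβm : β ≤ m - t)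
    (hσ1 : bit (π m) i = bit (π m) j)
    (hdiff : bit (π (m + 1 - β)) i ≠ bit (π (m + 1 - β)) j)
    (hmin : ∀ γ, 1 ≤ γ → γ < β → bit (π (m + 1 - γ)) i = bit (π (m + 1 - γ)) j) :
    (∀ α ∈ Finset.Icc 1 t, bit (π α) (flipBit (π (m + 1 - (β - 1))) i) = 0) ∧
      (∀ α ∈ Finset.Icc 1 t, bit (π α) (flipBit (π (m + 1 - (β - 1))) j) = 0) ∧
      flipBit (π (m + 1 - (β - 1))) i < (∑ α ∈ Finset.Icc (t + 1) m, 2 ^ (π α - 1)) + 1 ∧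
      flipBit (π (m + 1 - (β - 1))) j < (∑ α ∈ Finset.Icc (t + 1) m, 2 ^ (π α - 1)) + 1 :=
  stmt16_general m t π hπ i j β hiL hjL hiR hjR hβ2 hβm
end

section
/- Let m ≥ 2, π a permutation of {1,...,m}, 0 ≤ t ≤ m-2, with π(m-1) > π(α) and π(m) > π(α) for all 1 ≤ α ≤ t. Let i < j be integers in [0, 2^m) whose binary digits agree at positions π(1),...,π(t) and at position π(m), but differ at position π(m-1). Then j - i ≥ ∑_{α=1}^{t} 2^{π(α)-1} + 1. -/
open Finset

lemma sum_range_two_pow (q : ℕ) : ∑ p ∈ range q, 2 ^ p + 1 = 2 ^ q := by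
  induction q with
  | zero => simp
  | succ n ih => rw [Finset.sum_range_succ, pow_succ]; omega

lemma mod_two_pow (x q : ℕ) : x % 2 ^ q = ∑ p ∈ range q, x / 2 ^ p % 2 * 2 ^ p := by
  induction q with
  | zero => simp [Nat.mod_one]
  | succ n ih =>
    rw [Finset.sum_range_succ, ← ih]
    have h1 : x % 2 ^ (n + 1) % 2 ^ n = x % 2 ^ n :=
      Nat.mod_mod_of_dvd _ ⟨2, by rw [pow_succ]⟩
    have h2 : x % 2 ^ (n + 1) / 2 ^ n = x / 2 ^ n % 2 := by
      rw [pow_succ, Nat.mod_mul_right_div_self]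
    have h3 := Nat.div_add_mod (x % 2 ^ (n + 1)) (2 ^ n)
    rw [h1, h2] at h3
    rw [← h3]
    ring

theorem stmt18 (m t : ℕ) (hm : 2 ≤ m) (ht : t ≤ m - 2)
    (π : Equiv.Perm ℕ) (hπ : ∀ α, α ∈ Finset.Icc 1 m ↔ π α ∈ Finset.Icc 1 m)
    (hmax1 : ∀ α ∈ Finset.Icc 1 t, π α < π (m - 1))
    (hmax2 : ∀ α ∈ Finset.Icc 1 t, π α < π m)
    (i j : ℕ) (hij : i < j) (hj : j < 2 ^ m)
    (hagree : ∀ α ∈ Finset.Icc 1 t, bit (π α) i = bit (π α) j)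
    (hagreem : bit (π m) i = bit (π m) j)
    (hdiff : bit (π (m - 1)) i ≠ bit (π (m - 1)) j) :
    (∑ α ∈ Finset.Icc 1 t, 2 ^ (π α - 1)) + 1 ≤ j - i := by
  set q : ℕ := π (m - 1) - 1 with hq
  set Q : ℕ := 2 ^ q with hQ
  -- basic facts about positions
  have hπge : ∀ α ∈ Finset.Icc 1 t, 1 ≤ π α := by
    intro α hα
    rw [Finset.mem_Icc] at hα
    have : π α ∈ Finset.Icc 1 m := (hπ α).1 (Finset.mem_Icc.2 ⟨hα.1, by omega⟩)
    exact (Finset.mem_Icc.1 this).1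
  have helt : ∀ α ∈ Finset.Icc 1 t, π α - 1 < q := by
    intro α hα
    have h1 := hπge α hα
    have h2 := hmax1 α hα
    omega
  -- the image of positions
  set P : Finset ℕ := (Finset.Icc 1 t).image (fun α => π α - 1) with hP
  have hinj : ∀ a ∈ Finset.Icc 1 t, ∀ b ∈ Finset.Icc 1 t,
      π a - 1 = π b - 1 → a = b := by
    intro a ha b hb hab
    have h1 := hπge a ha
    have h2 := hπge b hb
    have : π a = π b := by omega
    exact π.injective this
  have hPsub : P ⊆ range q := by
    intro p hp
    rw [hP, Finset.mem_image] at hp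
    obtain ⟨α, hα, rfl⟩ := hp
    exact Finset.mem_range.2 (helt α hα)
  -- transfer sums to sums over P
  have hSsum : ∑ α ∈ Finset.Icc 1 t, 2 ^ (π α - 1) = ∑ p ∈ P, 2 ^ p :=
    (Finset.sum_image hinj).symm
  have hfi : ∑ α ∈ Finset.Icc 1 t, bit (π α) i * 2 ^ (π α - 1)
      = ∑ p ∈ P, i / 2 ^ p % 2 * 2 ^ p := by
    rw [hP, Finset.sum_image hinj]
    rfl
  have hfj : ∑ α ∈ Finset.Icc 1 t, bit (π α) j * 2 ^ (π α - 1)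
      = ∑ p ∈ P, j / 2 ^ p % 2 * 2 ^ p := by
    rw [hP, Finset.sum_image hinj]
    rfl
  have hff : ∑ p ∈ P, i / 2 ^ p % 2 * 2 ^ p = ∑ p ∈ P, j / 2 ^ p % 2 * 2 ^ p := by
    rw [← hfi, ← hfj]
    exact Finset.sum_congr rfl fun α hα => by rw [hagree α hα]
  -- key inequality 1 : f j ≤ j % Q
  have key1 : ∑ p ∈ P, j / 2 ^ p % 2 * 2 ^ p ≤ j % Q := by
    rw [hQ, mod_two_pow]
    exact Finset.sum_le_sum_of_subset hPsub
  -- key inequality 2 : i % Q + S + 1 ≤ Q + f i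
  have key2 : i % Q + (∑ p ∈ P, 2 ^ p) + 1 ≤ Q + ∑ p ∈ P, i / 2 ^ p % 2 * 2 ^ p := by
    have hsd1 : ∑ p ∈ range q \ P, i / 2 ^ p % 2 * 2 ^ p
        + ∑ p ∈ P, i / 2 ^ p % 2 * 2 ^ p = ∑ p ∈ range q, i / 2 ^ p % 2 * 2 ^ p :=
      Finset.sum_sdiff hPsub
    have hsd2 : ∑ p ∈ range q \ P, 2 ^ p + ∑ p ∈ P, 2 ^ p = ∑ p ∈ range q, 2 ^ p :=
      Finset.sum_sdiff hPsub
    have hle : ∑ p ∈ range q \ P, i / 2 ^ p % 2 * 2 ^ p ≤ ∑ p ∈ range q \ P, 2 ^ p := by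
      apply Finset.sum_le_sum
      intro p _
      have : i / 2 ^ p % 2 ≤ 1 := by omega
      calc i / 2 ^ p % 2 * 2 ^ p ≤ 1 * 2 ^ p := Nat.mul_le_mul_right _ this
        _ = 2 ^ p := one_mul _
    have hgeo := sum_range_two_pow q
    rw [hQ, mod_two_pow]
    omega
  -- the high parts differ
  have hdivne : i / Q ≠ j / Q := by
    intro h
    apply hdiff
    show i / 2 ^ (π (m - 1) - 1) % 2 = j / 2 ^ (π (m - 1) - 1) % 2
    rw [← hq, ← hQ, h]
  have hdivle : i / Q ≤ j / Q := Nat.div_le_div_right hij.le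
  have hdivlt : i / Q + 1 ≤ j / Q := by omega
  -- arithmetic wrap-up
  have hi := Nat.div_add_mod i Q
  have hjd := Nat.div_add_mod j Q
  have hmul : Q * (i / Q) + Q ≤ Q * (j / Q) := by
    have h1 : Q * (i / Q + 1) ≤ Q * (j / Q) := Nat.mul_le_mul_left Q hdivlt
    have h2 : Q * (i / Q + 1) = Q * (i / Q) + Q := Nat.mul_succ Q (i / Q)
    omega
  rw [hSsum]
  omega
end
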